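/- Let (Ω, 𝓕, ℙ) be a probability space and (V_1,ε_1),…,(V_K,ε_K) be i.i.d. pairs with V_k : Ω → ℝ^d and ε_k : Ω → ℝ, K ≥ 1. Let C₁ > 0 and R ≥ 0, suppose Σ := E[V_1 V_1ᵀ] is positive definite with V_1ᵀ Σ^{-1} V_1 ≤ C₁ d almost surely, |ε_1| ≤ R almost surely, and the conditional expectation of ε_1 given the σ-algebra generated by V_1 vanishes almost surely. Then for every δ ∈ (0,1), with probability at least 1 − δ, ‖Σ^{-1/2} (1/K) ∑_{k=1}^K ε_k V_k‖ ≤ √d · R · ( √(2 log(8d/δ)/K) + 2 √(C₁ d) log(8d/δ)/K + (2 C₁ d / 3) (log(8d/δ))^{3/2} / K^{3/2} ), where ‖·‖ on ℝ^d is the Euclidean norm. -/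

import Mathlib

/-!
Write `W = Σ^{-1/2}`. Each coordinate of `W ε_k V_k` is bounded by `R √(C₁ d)` (because
`|W V|² = Vᵀ Σ⁻¹ V`), centred (because `E[ε | V] = 0`) and has second moment at most `R²`
(because `E[(W V)(W V)ᵀ] = I`). Bernstein's inequality for the `K` i.i.d. copies bounds each
coordinate of the sum by `√(2 K R² L) + (2/3) R √(C₁ d) L` outside an event of probability
`2 e^{-L} = δ / (4d)`, where `L = log (8d/δ)`; a union bound over the `d` coordinates and
`‖x‖ ≤ √d · maxᵢ |xᵢ|` finish the proof.
-/

open Matrix MeasureTheory ProbabilityTheory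

open Classical in
/-- The positive semidefinite square root of a positive semidefinite real matrix
(junk value `0` on matrices that are not positive semidefinite). -/
noncomputable def msqrt {d : ℕ} (A : Matrix (Fin d) (Fin d) ℝ) : Matrix (Fin d) (Fin d) ℝ :=
  if h : A.PosSemidef then
    (h.1.eigenvectorUnitary : Matrix (Fin d) (Fin d) ℝ) *
      diagonal (Real.sqrt ∘ h.1.eigenvalues) *
      (star h.1.eigenvectorUnitary : Matrix (Fin d) (Fin d) ℝ) else 0

/-- The Euclidean norm of a vector in `Fin d → ℝ`. -/
noncomputable def euclNorm {d : ℕ} (v : Fin d → ℝ) : ℝ :=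
  Real.sqrt (∑ i, v i ^ 2)

open Real
open scoped Nat

theorem Nat.two_mul_three_pow_le_factorial (n : ℕ) : 2 * 3 ^ n ≤ (n + 2)! := by
  induction n with
  | zero => decide
  | succ n ih =>
    rw [Nat.factorial_succ, pow_succ]
    nlinarith

theorem Real.exp_le_one_add_add_sq_div_two_of_nonpos {y : ℝ} (hy : y ≤ 0) :
    exp y ≤ 1 + y + y ^ 2 / 2 := by
  -- multiply by `exp (-y)`, which dominates its cubic Taylor polynomial
  have hcubic := Real.sum_le_exp_of_nonneg (neg_nonneg.2 hy) 4
  norm_num [Finset.sum_range_succ, Nat.factorial] at hcubic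
  have hinv : exp y * exp (-y) = 1 := by rw [← exp_add, add_neg_cancel, exp_zero]
  have hP : 0 ≤ 1 + y + y ^ 2 / 2 := by nlinarith [sq_nonneg (y + 1)]
  have hPQ : 1 ≤ (1 + y + y ^ 2 / 2) * (1 - y + y ^ 2 / 2 - y ^ 3 / 6) := by
    nlinarith [pow_two_nonneg (y ^ 2), mul_nonneg (pow_two_nonneg y) (neg_nonneg.2 hy)]
  nlinarith [mul_le_mul_of_nonneg_left hcubic (mul_nonneg (exp_pos y).le hP)]

theorem Real.exp_le_one_add_add_sq_div_of_le {y c : ℝ} (hc0 : 0 ≤ c) (hc : c < 3) (hy : y ≤ c) :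
    exp y ≤ 1 + y + y ^ 2 / (2 * (1 - c / 3)) := by
  have hc' : 0 < 1 - c / 3 := by linarith
  rcases le_or_gt y 0 with hy0 | hy0
  · calc exp y ≤ 1 + y + y ^ 2 / 2 := exp_le_one_add_add_sq_div_two_of_nonpos hy0
      _ ≤ 1 + y + y ^ 2 / (2 * (1 - c / 3)) := by
        gcongr; linarith
  have hratio : y / 3 < 1 := by linarith
  have htail : HasSum (fun n => y ^ (n + 2) / (n + 2)!) (exp y - 1 - y) := by
    have := (hasSum_nat_add_iff' 2).2 (exp_eq_exp_ℝ ▸ NormedSpace.expSeries_div_hasSum_exp y)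
    simpa [Finset.sum_range_succ, sub_sub] using this
  have hgeom : HasSum (fun n : ℕ => y ^ 2 / 2 * (y / 3) ^ n) (y ^ 2 / 2 * (1 - y / 3)⁻¹) :=
    (hasSum_geometric_of_lt_one (by positivity) hratio).mul_left _
  have hle := hasSum_le (fun n => ?_) htail hgeom
  · calc exp y = 1 + y + (exp y - 1 - y) := by ring
      _ ≤ 1 + y + y ^ 2 / 2 * (1 - y / 3)⁻¹ := by linarith
      _ ≤ 1 + y + y ^ 2 / (2 * (1 - c / 3)) := by
        rw [← div_eq_mul_inv, div_div]
        gcongr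
  · have hfac : (2 * 3 ^ n : ℝ) ≤ (n + 2)! := by exact_mod_cast Nat.two_mul_three_pow_le_factorial n
    rw [div_le_iff₀ (by positivity), div_pow, pow_add]
    field_simp
    nlinarith [pow_pos hy0 n, pow_pos hy0 2]

theorem ae_eq_zero_of_integral_sq_eq_zero {Ω : Type*} [MeasurableSpace Ω] {μ : Measure Ω}
    [IsFiniteMeasure μ] {X : Ω → ℝ} (hX : AEMeasurable X μ) {b : ℝ}
    (hbd : ∀ᵐ ω ∂μ, |X ω| ≤ b) (h : ∫ ω, X ω ^ 2 ∂μ = 0) : X =ᵐ[μ] 0 := by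
  have hsq := (integral_eq_zero_iff_of_nonneg (fun ω => sq_nonneg (X ω))
    (MemLp.of_bound hX.aestronglyMeasurable b (by simpa using hbd)).integrable_sq).1 h
  filter_upwards [hsq] with ω hω
  simpa using hω

theorem integral_mul_eq_zero_of_condExp_eq_zero {Ω : Type*} {m m0 : MeasurableSpace Ω}
    {μ : Measure Ω} [IsFiniteMeasure μ] (hm : m ≤ m0) {f g : Ω → ℝ}
    (hf : StronglyMeasurable[m] f) {c : ℝ} (hfb : ∀ᵐ ω ∂μ, ‖f ω‖ ≤ c) (hg : Integrable g μ)
    (hcond : μ[g | m] =ᵐ[μ] 0) : ∫ ω, g ω * f ω ∂μ = 0 := by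
  calc ∫ ω, g ω * f ω ∂μ = ∫ ω, μ[f * g | m] ω ∂μ := by
        rw [integral_condExp hm]; simp only [Pi.mul_apply, mul_comm]
    _ = ∫ ω, (f * μ[g | m]) ω ∂μ :=
        integral_congr_ae (condExp_stronglyMeasurable_mul_of_bound hm hf hg c hfb)
    _ = 0 := by
        rw [integral_congr_ae (g := 0) (by filter_upwards [hcond] with ω hω; simp [hω])]
        simp

section Bernstein

variable {Ω : Type*} [MeasurableSpace Ω] {μ : Measure Ω} [IsProbabilityMeasure μ]

theorem mgf_le_exp_of_abs_le {X : Ω → ℝ} (hX : AEMeasurable X μ) {b lam : ℝ} (hb : 0 ≤ b)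
    (hbd : ∀ᵐ ω ∂μ, |X ω| ≤ b) (hmean : ∫ ω, X ω ∂μ = 0) (hlam : 0 ≤ lam) (hlamb : lam * b < 3) :
    mgf X μ lam ≤ exp (lam ^ 2 * (∫ ω, X ω ^ 2 ∂μ) / (2 * (1 - lam * b / 3))) := by
  set q := lam ^ 2 / (2 * (1 - lam * b / 3))
  have hXint : Integrable X μ := .of_bound hX.aestronglyMeasurable b (by simpa using hbd)
  have hX2int : Integrable (fun ω => X ω ^ 2) μ :=
    (MemLp.of_bound hX.aestronglyMeasurable b (by simpa using hbd)).integrable_sq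
  have hlin : Integrable (fun ω => 1 + lam * X ω) μ :=
    (integrable_const 1).add (hXint.const_mul lam)
  have hpoly : Integrable (fun ω => 1 + lam * X ω + q * X ω ^ 2) μ := hlin.add (hX2int.const_mul q)
  have hpointwise : ∀ᵐ ω ∂μ, exp (lam * X ω) ≤ 1 + lam * X ω + q * X ω ^ 2 := by
    filter_upwards [hbd] with ω hω
    have := exp_le_one_add_add_sq_div_of_le (by positivity) hlamb
      (mul_le_mul_of_nonneg_left (le_of_abs_le hω) hlam)
    convert this using 2
    ring
  calc mgf X μ lam ≤ ∫ ω, 1 + lam * X ω + q * X ω ^ 2 ∂μ :=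
        integral_mono_ae (integrable_exp_mul_of_le lam b hlam hX (by
          filter_upwards [hbd] with ω hω using le_of_abs_le hω)) hpoly hpointwise
    _ = 1 + q * ∫ ω, X ω ^ 2 ∂μ := by
        rw [integral_add hlin (hX2int.const_mul q), integral_add (integrable_const 1)
          (hXint.const_mul lam), integral_const_mul, integral_const_mul, hmean]
        simp
    _ ≤ exp (lam ^ 2 * (∫ ω, X ω ^ 2 ∂μ) / (2 * (1 - lam * b / 3))) := by
        rw [mul_div_right_comm, add_comm]
        exact add_one_le_exp _

theorem measure_sum_ge_le_bernstein {ι : Type*} [Fintype ι] {X : ι → Ω → ℝ}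
    (hmeas : ∀ k, Measurable (X k)) (hindep : iIndepFun X μ) {b v t : ℝ} (hb : 0 ≤ b)
    (hv : 0 < v) (ht : 0 ≤ t) (hbd : ∀ k, ∀ᵐ ω ∂μ, |X k ω| ≤ b)
    (hmean : ∀ k, ∫ ω, X k ω ∂μ = 0) (hvar : ∑ k, ∫ ω, X k ω ^ 2 ∂μ ≤ v) :
    μ.real {ω | t ≤ ∑ k, X k ω} ≤ exp (-(t ^ 2 / (2 * (v + b * t / 3)))) := by
  set D := v + b * t / 3 with hD_def
  have hD : 0 < D := by positivity
  -- Bernstein's choice of `λ`, which turns the Chernoff exponent into exactly `-t² / (2D)`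
  set lam := t / D with hlam_def
  have hlam : 0 ≤ lam := by positivity
  have hlamb : lam * b < 3 := by
    rw [div_mul_eq_mul_div, div_lt_iff₀ hD]; linarith
  have hslack : 1 - lam * b / 3 = v / D := by rw [hlam_def]; field_simp; linarith
  have hmgf : mgf (fun ω => ∑ k, X k ω) μ lam ≤ exp (lam ^ 2 * v / (2 * (v / D))) := by
    calc mgf (fun ω => ∑ k, X k ω) μ lam = ∏ k, mgf (X k) μ lam := by
          simpa only [Finset.sum_fn] using hindep.mgf_sum hmeas Finset.univ
      _ ≤ ∏ k, exp (lam ^ 2 * (∫ ω, X k ω ^ 2 ∂μ) / (2 * (1 - lam * b / 3))) :=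
          Finset.prod_le_prod (fun k _ => mgf_nonneg) fun k _ =>
            mgf_le_exp_of_abs_le (hmeas k).aemeasurable hb (hbd k) (hmean k) hlam hlamb
      _ = exp (lam ^ 2 * (∑ k, ∫ ω, X k ω ^ 2 ∂μ) / (2 * (1 - lam * b / 3))) := by
          rw [← exp_sum, Finset.mul_sum, Finset.sum_div]
      _ ≤ exp (lam ^ 2 * v / (2 * (v / D))) := by
          rw [hslack]; gcongr
  have hint : Integrable (fun ω => exp (lam * ∑ k, X k ω)) μ := by
    simpa [Finset.sum_apply] using hindep.integrable_exp_mul_sum hmeas (s := Finset.univ)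
      fun k _ => integrable_exp_mul_of_le lam b hlam (hmeas k).aemeasurable
        (by filter_upwards [hbd k] with ω hω using le_of_abs_le hω)
  calc μ.real {ω | t ≤ ∑ k, X k ω}
      ≤ exp (-lam * t) * mgf (fun ω => ∑ k, X k ω) μ lam := measure_ge_le_exp_mul_mgf t hlam hint
    _ ≤ exp (-lam * t) * exp (lam ^ 2 * v / (2 * (v / D))) := by gcongr
    _ = exp (-(t ^ 2 / (2 * D))) := by
        rw [← exp_add, hlam_def]; congr 1; field_simp; ring

theorem measure_sum_gt_le_exp_neg {ι : Type*} [Fintype ι] {X : ι → Ω → ℝ}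
    (hmeas : ∀ k, Measurable (X k)) (hindep : iIndepFun X μ) {b v L : ℝ} (hb : 0 ≤ b)
    (hL : 0 ≤ L) (hbd : ∀ k, ∀ᵐ ω ∂μ, |X k ω| ≤ b)
    (hmean : ∀ k, ∫ ω, X k ω ∂μ = 0) (hvar : ∑ k, ∫ ω, X k ω ^ 2 ∂μ ≤ v) :
    μ {ω | √(2 * v * L) + 2 / 3 * b * L < ∑ k, X k ω} ≤ ENNReal.ofReal (exp (-L)) := by
  set s := √(2 * v * L)
  have hs : 0 ≤ s := sqrt_nonneg _
  rcases le_or_gt v 0 with hv | hv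
  · -- the event is strict precisely so that this degenerate case holds
    have hnonneg : ∀ k ∈ Finset.univ, 0 ≤ ∫ ω, X k ω ^ 2 ∂μ := fun k _ =>
      integral_nonneg fun ω => sq_nonneg _
    have hsecond := (Finset.sum_eq_zero_iff_of_nonneg hnonneg).1
      (le_antisymm (hvar.trans hv) (Finset.sum_nonneg hnonneg))
    have hzero : ∀ k, X k =ᵐ[μ] 0 := fun k => ae_eq_zero_of_integral_sq_eq_zero
      (hmeas k).aemeasurable (hbd k) (hsecond k (Finset.mem_univ k))
    refine (measure_eq_zero_iff_ae_notMem.2 ?_).trans_le bot_le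
    filter_upwards [ae_all_iff.2 hzero] with ω hω
    simp only [hω, Pi.zero_apply, Finset.sum_const_zero, not_lt]
    positivity
  set t := s + 2 / 3 * b * L with ht
  have hexponent : L ≤ t ^ 2 / (2 * (v + b * t / 3)) := by
    have hs2 : s ^ 2 = 2 * v * L := sq_sqrt (by positivity)
    rw [le_div_iff₀ (by positivity), ht]
    nlinarith [mul_nonneg (mul_nonneg hs hb) hL]
  calc μ {ω | t < ∑ k, X k ω} ≤ μ {ω | t ≤ ∑ k, X k ω} := measure_mono fun ω (hω : t < _) => hω.le
    _ = ENNReal.ofReal (μ.real {ω | t ≤ ∑ k, X k ω}) := by rw [ofReal_measureReal]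
    _ ≤ ENNReal.ofReal (exp (-L)) := by
        gcongr
        refine (measure_sum_ge_le_bernstein hmeas hindep hb hv (by positivity) hbd hmean
          hvar).trans ?_
        gcongr

theorem measure_abs_sum_gt_le_of_identDistrib {ι : Type*} [Fintype ι] {X : ι → Ω → ℝ}
    {X₀ : Ω → ℝ} (hmeas : ∀ k, Measurable (X k)) (hindep : iIndepFun X μ)
    (hident : ∀ k, IdentDistrib (X k) X₀ μ μ) {b v L : ℝ} (hb : 0 ≤ b) (hL : 0 ≤ L)
    (hbd : ∀ᵐ ω ∂μ, |X₀ ω| ≤ b) (hmean : ∫ ω, X₀ ω ∂μ = 0) (hvar : ∫ ω, X₀ ω ^ 2 ∂μ ≤ v) :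
    μ {ω | √(2 * (Fintype.card ι * v) * L) + 2 / 3 * b * L < |∑ k, X k ω|}
      ≤ ENNReal.ofReal (2 * exp (-L)) := by
  have hbdk : ∀ k, ∀ᵐ ω ∂μ, |X k ω| ≤ b := fun k =>
    (hident k).symm.ae_snd (p := fun x => |x| ≤ b) (measurableSet_le (by fun_prop) (by fun_prop))
      hbd
  have hmeank : ∀ k, ∫ ω, X k ω ∂μ = 0 := fun k => (hident k).integral_eq.trans hmean
  have hvark : ∑ k, ∫ ω, X k ω ^ 2 ∂μ ≤ Fintype.card ι * v := by
    calc ∑ k, ∫ ω, X k ω ^ 2 ∂μ ≤ ∑ _k : ι, v := Finset.sum_le_sum fun k _ =>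
          ((hident k).comp (measurable_id.pow_const 2)).integral_eq.trans_le hvar
      _ = Fintype.card ι * v := by simp
  set t := √(2 * (Fintype.card ι * v) * L) + 2 / 3 * b * L
  have hupper := measure_sum_gt_le_exp_neg hmeas hindep hb hL hbdk hmeank hvark
  have hlower := measure_sum_gt_le_exp_neg (X := fun k ω => -X k ω) (fun k => (hmeas k).neg)
    (hindep.comp (fun _ x => -x) fun _ => measurable_neg) hb hL
    (fun k => by simpa only [abs_neg] using hbdk k)
    (fun k => by rw [integral_neg, hmeank k, neg_zero])
    (by simpa only [neg_sq] using hvark)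
  simp only [Finset.sum_neg_distrib] at hlower
  calc μ {ω | t < |∑ k, X k ω|}
      ≤ μ ({ω | t < ∑ k, X k ω} ∪ {ω | t < -∑ k, X k ω}) :=
        measure_mono fun ω (hω : t < _) => lt_abs.1 hω
    _ ≤ ENNReal.ofReal (exp (-L)) + ENNReal.ofReal (exp (-L)) :=
        (measure_union_le _ _).trans (add_le_add hupper hlower)
    _ = ENNReal.ofReal (2 * exp (-L)) := by
        rw [← ENNReal.ofReal_add (exp_pos _).le (exp_pos _).le, two_mul]

theorem one_sub_sum_le_measure_forall_abs_le {ι : Type*} [Fintype ι] (Y : ι → Ω → ℝ) (t : ℝ) :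
    1 - ∑ i, μ {ω | t < |Y i ω|} ≤ μ {ω | ∀ i, |Y i ω| ≤ t} := by
  rw [tsub_le_iff_right]
  calc 1 = μ Set.univ := measure_univ.symm
    _ ≤ μ {ω | ∀ i, |Y i ω| ≤ t} + μ {ω | ∀ i, |Y i ω| ≤ t}ᶜ := measure_univ_le_add_compl _
    _ ≤ μ {ω | ∀ i, |Y i ω| ≤ t} + ∑ i, μ {ω | t < |Y i ω|} := by
        gcongr
        refine (measure_mono fun ω hω => ?_).trans (measure_iUnion_fintype_le μ _)
        simpa using hω

end Bernstein

section Whitening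

variable {Ω : Type*} [MeasurableSpace Ω] {μ : Measure Ω} {n : Type*} [Fintype n]

noncomputable def secondMoment (W : Ω → n → ℝ) (μ : Measure Ω) : Matrix n n ℝ :=
  Matrix.of fun i j => ∫ ω, W ω i * W ω j ∂μ

theorem secondMoment_mulVec {m : Type*} (B : Matrix m n ℝ) {W : Ω → n → ℝ}
    (hW : ∀ i j, Integrable (fun ω => W ω i * W ω j) μ) :
    secondMoment (fun ω => B *ᵥ W ω) μ = B * secondMoment W μ * Bᵀ := by
  ext i j
  have hexpand : ∀ ω, (B *ᵥ W ω) i * (B *ᵥ W ω) j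
      = ∑ k, ∑ l, B i k * B j l * (W ω k * W ω l) := fun ω => by
    simp only [mulVec, dotProduct, Finset.sum_mul_sum]
    exact Finset.sum_congr rfl fun k _ => Finset.sum_congr rfl fun l _ => by ring
  simp only [secondMoment, of_apply, hexpand, mul_apply, transpose_apply, Finset.sum_mul]
  conv_rhs => rw [Finset.sum_comm]
  rw [integral_finsetSum _ fun k _ => integrable_finsetSum _ fun l _ => (hW k l).const_mul _]
  refine Finset.sum_congr rfl fun k _ => ?_
  rw [integral_finsetSum _ fun l _ => (hW k l).const_mul _]
  exact Finset.sum_congr rfl fun l _ => by rw [integral_const_mul]; ring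

variable [DecidableEq n]

theorem dotProduct_inv_mulVec_self (S : Matrix n n ℝ) (v : n → ℝ) :
    (S⁻¹ *ᵥ v) ⬝ᵥ (S⁻¹ *ᵥ v) = v ⬝ᵥ ((S * Sᵀ)⁻¹ *ᵥ v) := by
  rw [Matrix.mul_inv_rev, ← transpose_nonsing_inv, ← mulVec_mulVec, dotProduct_mulVec v,
    vecMul_transpose]

theorem secondMoment_inv_mulVec_eq_one {V : Ω → n → ℝ} {S : Matrix n n ℝ} (hS : IsUnit S.det)
    (hV : secondMoment V μ = S * Sᵀ)
    (hW : ∀ i j, Integrable (fun ω => (S⁻¹ *ᵥ V ω) i * (S⁻¹ *ᵥ V ω) j) μ) :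
    secondMoment (fun ω => S⁻¹ *ᵥ V ω) μ = 1 := by
  have hmoment := secondMoment_mulVec S hW
  simp only [mulVec_mulVec, mul_nonsing_inv S hS, one_mulVec, hV] at hmoment
  have hSu : IsUnit S := (isUnit_iff_isUnit_det S).2 hS
  have hSTu : IsUnit Sᵀ := (isUnit_iff_isUnit_det _).2 (by rwa [det_transpose])
  refine (hSTu.mul_right_cancel (hSu.mul_left_cancel ?_)).symm
  rwa [Matrix.one_mul, ← Matrix.mul_assoc S]

theorem whitened_noise_moments [IsFiniteMeasure μ] {V : Ω → n → ℝ} {e : Ω → ℝ}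
    (hV : Measurable V) (he : Measurable e) {S : Matrix n n ℝ} (hS : IsUnit S.det)
    (hmoment : secondMoment V μ = S * Sᵀ) {C R : ℝ} (hR : 0 ≤ R)
    (hVbd : ∀ᵐ ω ∂μ, V ω ⬝ᵥ ((S * Sᵀ)⁻¹ *ᵥ V ω) ≤ C) (hebd : ∀ᵐ ω ∂μ, |e ω| ≤ R)
    (hcond : μ[e | MeasurableSpace.comap V inferInstance] =ᵐ[μ] 0) (i : n) :
    (∀ᵐ ω ∂μ, |e ω * (S⁻¹ *ᵥ V ω) i| ≤ R * √C) ∧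
      ∫ ω, e ω * (S⁻¹ *ᵥ V ω) i ∂μ = 0 ∧
      ∫ ω, (e ω * (S⁻¹ *ᵥ V ω) i) ^ 2 ∂μ ≤ R ^ 2 := by
  have hcoord : ∀ j, Measurable fun v : n → ℝ => (S⁻¹ *ᵥ v) j := fun j => by fun_prop
  have hYbd : ∀ᵐ ω ∂μ, ∀ j, |(S⁻¹ *ᵥ V ω) j| ≤ √C := by
    filter_upwards [hVbd] with ω hω j
    refine abs_le_sqrt (le_trans ?_ ((dotProduct_inv_mulVec_self S (V ω)).trans_le hω))
    rw [sq, dotProduct]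
    exact Finset.single_le_sum (f := fun j => (S⁻¹ *ᵥ V ω) j * (S⁻¹ *ᵥ V ω) j)
      (fun j _ => mul_self_nonneg _) (Finset.mem_univ j)
  have hYint : ∀ j l, Integrable (fun ω => (S⁻¹ *ᵥ V ω) j * (S⁻¹ *ᵥ V ω) l) μ := fun j l =>
    .of_bound (((hcoord j).comp hV).mul ((hcoord l).comp hV)).aestronglyMeasurable (√C * √C) (by
      filter_upwards [hYbd] with ω hω
      rw [norm_mul]
      exact mul_le_mul (hω j) (hω l) (abs_nonneg _) (sqrt_nonneg _))
  have hYsq : ∫ ω, (S⁻¹ *ᵥ V ω) i * (S⁻¹ *ᵥ V ω) i ∂μ = 1 := by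
    simpa [secondMoment] using
      congrFun (congrFun (secondMoment_inv_mulVec_eq_one hS hmoment hYint) i) i
  have hZbd : ∀ᵐ ω ∂μ, |e ω * (S⁻¹ *ᵥ V ω) i| ≤ R * √C := by
    filter_upwards [hebd, hYbd] with ω he hY
    rw [abs_mul]
    exact mul_le_mul he (hY i) (abs_nonneg _) hR
  refine ⟨hZbd, ?_, ?_⟩
  · refine integral_mul_eq_zero_of_condExp_eq_zero hV.comap_le
      ((hcoord i).comp (comap_measurable V)).stronglyMeasurable (c := √C) ?_
      (.of_bound he.aestronglyMeasurable R (by simpa using hebd)) hcond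
    filter_upwards [hYbd] with ω hω using hω i
  · calc ∫ ω, (e ω * (S⁻¹ *ᵥ V ω) i) ^ 2 ∂μ
        ≤ ∫ ω, R ^ 2 * ((S⁻¹ *ᵥ V ω) i * (S⁻¹ *ᵥ V ω) i) ∂μ := by
          refine integral_mono_ae ?_ ((hYint i i).const_mul _) ?_
          · exact (MemLp.of_bound (he.mul ((hcoord i).comp hV)).aestronglyMeasurable _
              (by simpa using hZbd)).integrable_sq
          · filter_upwards [hebd] with ω hω
            rw [mul_pow, ← sq]
            exact mul_le_mul_of_nonneg_right (sq_le_sq' (neg_le_of_abs_le hω) (le_of_abs_le hω))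
              (sq_nonneg _)
      _ = R ^ 2 := by rw [integral_const_mul, hYsq, mul_one]

end Whitening

section SquareRoot

open scoped MatrixOrder

variable {d : ℕ} {A : Matrix (Fin d) (Fin d) ℝ}

theorem Matrix.PosSemidef.msqrt_eq_sqrt (hA : A.PosSemidef) : msqrt A = CFC.sqrt A := by
  rw [msqrt, dif_pos hA, CFC.sqrt_eq_cfc, cfc_nnreal_eq_real _ A hA.nonneg, hA.1.cfc_eq,
    IsHermitian.cfc, Unitary.conjStarAlgAut_apply]
  congr 3
  ext i
  simp [max_eq_left (hA.eigenvalues_nonneg i)]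

theorem Matrix.PosSemidef.msqrt_mul_transpose (hA : A.PosSemidef) : msqrt A * (msqrt A)ᵀ = A := by
  rw [hA.msqrt_eq_sqrt, ← conjTranspose_eq_transpose_of_trivial, ← star_eq_conjTranspose,
    (CFC.sqrt_nonneg A).isSelfAdjoint.star_eq, CFC.sqrt_mul_sqrt_self A hA.nonneg]

theorem Matrix.PosDef.isUnit_det_msqrt (hA : A.PosDef) : IsUnit (msqrt A).det := by
  rw [← isUnit_iff_isUnit_det, hA.posSemidef.msqrt_eq_sqrt,
    CFC.isUnit_sqrt_iff A hA.posSemidef.nonneg]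
  exact hA.isUnit

end SquareRoot

theorem euclNorm_le_sqrt_mul {d : ℕ} {v : Fin d → ℝ} {r : ℝ} (hr : 0 ≤ r) (h : ∀ i, |v i| ≤ r) :
    euclNorm v ≤ √d * r := by
  calc euclNorm v ≤ √(∑ _i : Fin d, r ^ 2) :=
        sqrt_le_sqrt (Finset.sum_le_sum fun i _ =>
          sq_le_sq' (neg_le_of_abs_le (h i)) (le_of_abs_le (h i)))
    _ = √d * r := by simp [sqrt_mul (Nat.cast_nonneg d), sqrt_sq hr]

theorem ofReal_one_sub_le_one_sub_sum_exp_neg_log (d : ℕ) {δ : ℝ} (hδ : 0 < δ) :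
    ENNReal.ofReal (1 - δ) ≤ 1 - ∑ _i : Fin d, ENNReal.ofReal (2 * exp (-log (8 * d / δ))) := by
  have hbudget : (d : ℝ) * (2 * exp (-log (8 * d / δ))) ≤ δ := by
    rcases Nat.eq_zero_or_pos d with rfl | hd
    · simp [hδ.le]
    · rw [exp_neg, exp_log (by positivity)]
      field_simp
      linarith
  rw [Finset.sum_const, Finset.card_univ, Fintype.card_fin, nsmul_eq_mul, ← ENNReal.ofReal_natCast,
    ← ENNReal.ofReal_mul (Nat.cast_nonneg d), ENNReal.ofReal_sub _ hδ.le, ENNReal.ofReal_one]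
  exact tsub_le_tsub_left (ENNReal.ofReal_le_ofReal hbudget) 1

theorem log_eight_mul_div_nonneg (d : ℕ) {δ : ℝ} (hδ : 0 < δ) (hδ1 : δ ≤ 1) :
    0 ≤ log (8 * d / δ) := by
  rcases Nat.eq_zero_or_pos d with rfl | hd
  · simp
  · have hd' : (1 : ℝ) ≤ d := by exact_mod_cast hd
    exact log_nonneg (by rw [le_div_iff₀ hδ]; linarith)

theorem inv_mul_bernstein_radius_le {K R C d L : ℝ} (hK : 0 < K) (hR : 0 ≤ R) (hC : 0 ≤ C)
    (hd : 0 ≤ d) (hL : 0 ≤ L) :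
    K⁻¹ * (√(2 * (K * R ^ 2) * L) + 2 / 3 * (R * √(C * d)) * L)
      ≤ R * (√(2 * L / K) + 2 * √(C * d) * L / K
        + 2 * C * d / 3 * L ^ ((3 : ℝ) / 2) / K ^ ((3 : ℝ) / 2)) := by
  have hvariance : K⁻¹ * √(2 * (K * R ^ 2) * L) = R * √(2 * L / K) := by
    rw [show 2 * (K * R ^ 2) * L = R ^ 2 * (2 * L / K) * K ^ 2 by field_simp, sqrt_mul, sqrt_mul,
      sqrt_sq hR, sqrt_sq hK.le] <;> first | positivity | field_simp
  have hthird : 0 ≤ 2 * C * d / 3 * L ^ ((3 : ℝ) / 2) / K ^ ((3 : ℝ) / 2) := by positivity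
  have hexpand : R * (√(2 * L / K) + 2 * √(C * d) * L / K
        + 2 * C * d / 3 * L ^ ((3 : ℝ) / 2) / K ^ ((3 : ℝ) / 2))
      = R * √(2 * L / K) + 2 * (R * √(C * d) * L / K)
        + R * (2 * C * d / 3 * L ^ ((3 : ℝ) / 2) / K ^ ((3 : ℝ) / 2)) := by ring
  have hbias : K⁻¹ * (2 / 3 * (R * √(C * d)) * L) = 2 / 3 * (R * √(C * d) * L / K) := by ring
  rw [mul_add, hvariance, hbias, hexpand]
  linarith [mul_nonneg hR hthird, (by positivity : 0 ≤ R * √(C * d) * L / K)]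

theorem martingale_noise_concentration
    {Ω : Type*} [MeasurableSpace Ω] (μ : Measure Ω) [IsProbabilityMeasure μ]
    {d K : ℕ} (hK : 1 ≤ K) (C₁ R : ℝ) (hC₁ : 0 < C₁) (hR : 0 ≤ R)
    (V : Fin K → Ω → Fin d → ℝ) (ε : Fin K → Ω → ℝ)
    (hVmeas : ∀ k, Measurable (V k)) (hεmeas : ∀ k, Measurable (ε k))
    (hindep : iIndepFun (fun k ω => (V k ω, ε k ω)) μ)
    (hident : ∀ k, IdentDistrib (fun ω => (V k ω, ε k ω))
      (fun ω => (V ⟨0, hK⟩ ω, ε ⟨0, hK⟩ ω)) μ μ)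
    (Sig : Matrix (Fin d) (Fin d) ℝ)
    (hSigdef : Sig = Matrix.of fun i j => ∫ ω, V ⟨0, hK⟩ ω i * V ⟨0, hK⟩ ω j ∂μ)
    (hSig : Sig.PosDef)
    (hVbound : ∀ᵐ ω ∂μ, V ⟨0, hK⟩ ω ⬝ᵥ (Sig⁻¹ *ᵥ V ⟨0, hK⟩ ω) ≤ C₁ * d)
    (hεbound : ∀ᵐ ω ∂μ, |ε ⟨0, hK⟩ ω| ≤ R)
    (hcond : μ[ε ⟨0, hK⟩ | MeasurableSpace.comap (V ⟨0, hK⟩) inferInstance] =ᵐ[μ] 0) :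
    ∀ δ : ℝ, 0 < δ → δ < 1 →
      ENNReal.ofReal (1 - δ) ≤
        μ {ω | euclNorm ((msqrt Sig)⁻¹ *ᵥ ((K : ℝ)⁻¹ • ∑ k, ε k ω • V k ω))
            ≤ Real.sqrt d * R *
              (Real.sqrt (2 * Real.log (8 * d / δ) / K)
                + 2 * Real.sqrt (C₁ * d) * Real.log (8 * d / δ) / K
                + (2 * C₁ * d / 3) * Real.log (8 * d / δ) ^ ((3 : ℝ) / 2)
                    / (K : ℝ) ^ ((3 : ℝ) / 2))} := by
  intro δ hδ hδ1
  have hSS := hSig.posSemidef.msqrt_mul_transpose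
  set L := log (8 * d / δ)
  have hL : 0 ≤ L := log_eight_mul_div_nonneg d hδ hδ1.le
  set t := √(2 * (K * R ^ 2) * L) + 2 / 3 * (R * √(C₁ * d)) * L
  have htail : ∀ i, μ {ω | t < |∑ k, ε k ω * ((msqrt Sig)⁻¹ *ᵥ V k ω) i|}
      ≤ ENNReal.ofReal (2 * exp (-L)) := fun i => by
    obtain ⟨hbd, hmean, hvar⟩ := whitened_noise_moments (hVmeas _) (hεmeas _)
      hSig.isUnit_det_msqrt (by rw [hSS, hSigdef]; rfl) hR (by rwa [hSS]) hεbound hcond i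
    have hφ : Measurable fun p : (Fin d → ℝ) × ℝ => p.2 * ((msqrt Sig)⁻¹ *ᵥ p.1) i := by fun_prop
    simpa only [Fintype.card_fin, Function.comp_apply] using
      measure_abs_sum_gt_le_of_identDistrib (fun k => by fun_prop) (hindep.comp _ fun _ => hφ)
        (fun k => (hident k).comp hφ) (by positivity) hL hbd hmean hvar
  calc ENNReal.ofReal (1 - δ)
      ≤ 1 - ∑ _i : Fin d, ENNReal.ofReal (2 * exp (-L)) :=
        ofReal_one_sub_le_one_sub_sum_exp_neg_log d hδ
    _ ≤ 1 - ∑ i, μ {ω | t < |∑ k, ε k ω * ((msqrt Sig)⁻¹ *ᵥ V k ω) i|} := by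
        gcongr with i; exact htail i
    _ ≤ μ {ω | ∀ i, |∑ k, ε k ω * ((msqrt Sig)⁻¹ *ᵥ V k ω) i| ≤ t} :=
        one_sub_sum_le_measure_forall_abs_le _ t
    _ ≤ _ := measure_mono fun ω hω => by
        refine (euclNorm_le_sqrt_mul (r := (K : ℝ)⁻¹ * t) (by positivity) fun i => ?_).trans ?_
        · simp only [mulVec_smul, mulVec_sum, Pi.smul_apply, Finset.sum_apply, smul_eq_mul]
          rw [abs_mul, abs_of_pos (by positivity)]
          exact mul_le_mul_of_nonneg_left (hω i) (by positivity)
        · rw [mul_assoc]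
          exact mul_le_mul_of_nonneg_left
            (inv_mul_bernstein_radius_le (by positivity) hR hC₁.le d.cast_nonneg hL) (sqrt_nonneg _)
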